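/- For a generic well-poised sequence, the summand F_k(a₁,…,a_{r+1}; q, z) := z^k · ∏_i (a_i;q)_k / [(q;q)_k · ∏_{i=2}^{r+1} (a₁q/a_i;q)_k] satisfies F_k(a₁,…,a_{r+1}; q, qz) − F_k(a₁,…,a_r, a_{r+1}q; q, z) = β · F_{k−1}(a₁q², a₂q, …, a_{r+1}q; q, z), where β = −(1−a₁)(1−a₁q)(1−a₂)⋯(1−a_r) z / [(1−a₁/a_{r+1})(1−a₁q/a₂)⋯(1−a₁q/a_{r+1})]. -/

import Mathlib

/-!
Write `k = m + 1` and peel one factor off every q-shifted factorial,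
`(x;q)_{m+1} = (1 - x) (xq;q)_m`. For `2 ≤ i ≤ r` the factor `(a_i;q)_k / (a₁q/a_i;q)_k` of `F_k`
becomes `(1 - a_i)/(1 - a₁q/a_i)` times the matching factor of `F_{k-1}(a₁q², a₂q, …, a_{r+1}q)`.
The two terms on the left differ only in the factor of `b = a_{r+1}`, and with `c = a₁/b`,
`t = q^k` their difference comes down to `t(1-b)(1-c) - (1-bt)(1-ct) = -(1-t)(1-a₁t)`.
Finally `1 - t` cancels against `(q;q)_k = (q;q)_{k-1}(1-t)` and
`(a₁;q)_k (1 - a₁t) = (1 - a₁)(1 - a₁q)(a₁q²;q)_{k-1}`.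
-/

/-- The q-shifted factorial `(x;q)_n`. -/
def qPoch {K : Type*} [Field K] (q x : K) (n : ℕ) : K :=
  ∏ j ∈ Finset.range n, (1 - x * q ^ j)

/-- The `k`-th term of a well-poised basic hypergeometric series with
upper parameters `a 1, …, a (r+1)`:
`F_k = z^k ∏_{i=1}^{r+1} (a_i;q)_k / ((q;q)_k ∏_{i=2}^{r+1} (a₁q/a_i;q)_k)`. -/
def wpTerm {K : Type*} [Field K] (q z : K) (r : ℕ) (a : ℕ → K) (k : ℕ) : K :=
  z ^ k * (∏ i ∈ Finset.Icc 1 (r + 1), qPoch q (a i) k) /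
    (qPoch q q k * ∏ i ∈ Finset.Icc 2 (r + 1), qPoch q (a 1 * q / a i) k)

open Finset

section
variable {K : Type*} [Field K]

lemma qPoch_succ (q x : K) (n : ℕ) : qPoch q x (n + 1) = qPoch q x n * (1 - x * q ^ n) :=
  prod_range_succ _ _

lemma qPoch_succ' (q x : K) (n : ℕ) : qPoch q x (n + 1) = (1 - x) * qPoch q (x * q) n := by
  simp only [qPoch, prod_range_succ', pow_zero, mul_one, pow_succ', mul_assoc, mul_comm _ (1 - x)]

lemma qPoch_succ_div_qPoch_succ (q x y : K) (n : ℕ) :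
    qPoch q x (n + 1) / qPoch q y (n + 1)
      = (1 - x) / (1 - y) * (qPoch q (x * q) n / qPoch q (y * q) n) := by
  rw [qPoch_succ', qPoch_succ', mul_div_mul_comm]

lemma prod_qPoch_succ_div (q c : K) (x : ℕ → K) (s : Finset ℕ) (n : ℕ) :
    ∏ i ∈ s, qPoch q (x i) (n + 1) / qPoch q (c * q / x i) (n + 1)
      = (∏ i ∈ s, (1 - x i)) / (∏ i ∈ s, (1 - c * q / x i)) *
        ∏ i ∈ s, qPoch q (x i * q) n / qPoch q (c * q ^ 2 / x i) n := by
  rw [← prod_div_distrib, ← prod_mul_distrib]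
  refine prod_congr rfl fun i _ => ?_
  rw [qPoch_succ_div_qPoch_succ, show c * q / x i * q = c * q ^ 2 / x i by ring]

lemma pow_mul_qPoch_div_sub_qPoch_div (q b c : K) (n : ℕ) (hc : 1 - c ≠ 0)
    (hcq : qPoch q (c * q) (n + 1) ≠ 0) :
    q ^ (n + 1) * (qPoch q b (n + 1) / qPoch q (c * q) (n + 1))
        - qPoch q (b * q) (n + 1) / qPoch q c (n + 1)
      = -((1 - q ^ (n + 1)) * (1 - b * c * q ^ (n + 1))) / ((1 - c) * (1 - c * q))
          * (qPoch q (b * q) n / qPoch q (c * q ^ 2) n) := by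
  have hfirst : qPoch q (c * q) (n + 1) = (1 - c * q) * qPoch q (c * q ^ 2) n := by
    rw [qPoch_succ', mul_assoc, ← sq]
  obtain ⟨hP, hlast⟩ := mul_ne_zero_iff.mp (qPoch_succ q (c * q) n ▸ hcq)
  have hcq1 : 1 - c * q ≠ 0 := left_ne_zero_of_mul (hfirst ▸ hcq)
  have hE : qPoch q (c * q ^ 2) n = qPoch q (c * q) n * (1 - c * q * q ^ n) / (1 - c * q) := by
    rw [← qPoch_succ, hfirst, mul_div_cancel_left₀ _ hcq1]
  rw [hE, qPoch_succ q (c * q), qPoch_succ' q b, qPoch_succ' q c, qPoch_succ q (b * q), pow_succ,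
    div_div_eq_mul_div, div_mul_div_comm, mul_div_assoc',
    div_sub_div _ _ (mul_ne_zero hP hlast) (mul_ne_zero hc hP),
    div_eq_div_iff (mul_ne_zero (mul_ne_zero hP hlast) (mul_ne_zero hc hP))
      (mul_ne_zero (mul_ne_zero hc hcq1) (mul_ne_zero hP hlast))]
  ring

lemma qPoch_div_qPoch_self_succ_mul (q x : K) (n : ℕ) (h : qPoch q q (n + 1) ≠ 0) :
    qPoch q x (n + 1) / qPoch q q (n + 1) * ((1 - q ^ (n + 1)) * (1 - x * q ^ (n + 1)))
      = (1 - x) * (1 - x * q) * (qPoch q (x * q ^ 2) n / qPoch q q n) := by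
  have hx : qPoch q x (n + 1) * (1 - x * q ^ (n + 1))
      = (1 - x) * (1 - x * q) * qPoch q (x * q ^ 2) n := by
    rw [← qPoch_succ, qPoch_succ', qPoch_succ', ← mul_assoc, mul_assoc x, ← sq]
  rw [qPoch_succ q q n, ← pow_succ'] at h ⊢
  obtain ⟨hQ, ht⟩ := mul_ne_zero_iff.mp h
  rw [mul_div_assoc', ← hx]
  field_simp

lemma wpTerm_eq_mul_prod (q z : K) (r : ℕ) (a : ℕ → K) (k : ℕ) :
    wpTerm q z r a k = z ^ k * (qPoch q (a 1) k / qPoch q q k) *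
      ∏ i ∈ Icc 2 (r + 1), qPoch q (a i) k / qPoch q (a 1 * q / a i) k := by
  have hIcc : Icc 1 (r + 1) = insert 1 (Icc 2 (r + 1)) := by
    ext i; simp only [mem_insert, mem_Icc]; omega
  rw [wpTerm, hIcc, prod_insert (by simp), prod_div_distrib]
  ring

lemma wpTerm_update_last (q z : K) {r : ℕ} (hr : 1 ≤ r) (a : ℕ → K) (b : K) (k : ℕ) :
    wpTerm q z r (Function.update a (r + 1) b) k = z ^ k * (qPoch q (a 1) k / qPoch q q k) *
      ((∏ i ∈ Icc 2 r, qPoch q (a i) k / qPoch q (a 1 * q / a i) k) *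
        (qPoch q b k / qPoch q (a 1 * q / b) k)) := by
  have hne : ∀ i ∈ Icc 2 r, i ≠ r + 1 := fun i hi => by rw [mem_Icc] at hi; omega
  rw [wpTerm_eq_mul_prod, prod_Icc_succ_top (show 2 ≤ r + 1 by omega), Function.update_self,
    Function.update_of_ne (by omega : 1 ≠ r + 1)]
  congr 2
  exact prod_congr rfl fun i hi => by rw [Function.update_of_ne (hne i hi)]

lemma wpTerm_shift (q z : K) (hq : q ≠ 0) (r : ℕ) (a : ℕ → K) (k : ℕ) :
    wpTerm q z r (fun i => if i = 1 then a 1 * q ^ 2 else a i * q) k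
      = z ^ k * (qPoch q (a 1 * q ^ 2) k / qPoch q q k) *
        ∏ i ∈ Icc 2 (r + 1), qPoch q (a i * q) k / qPoch q (a 1 * q ^ 2 / a i) k := by
  rw [wpTerm_eq_mul_prod, if_pos rfl]
  refine congrArg _ (prod_congr rfl fun i hi => ?_)
  rw [if_neg (by rw [mem_Icc] at hi; omega), mul_div_mul_right _ _ hq]

end

theorem wp_contiguous_two_general {K : Type*} [Field K] (q z : K) (r : ℕ) (a : ℕ → K) (k : ℕ)
    (hr : 2 ≤ r) (hk : 1 ≤ k) (hq : q ≠ 0) (ha : ∀ i, a i ≠ 0)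
    (hqq : qPoch q q k ≠ 0)
    (hden : ∀ i ∈ Finset.Icc 2 (r + 1), qPoch q (a 1 * q / a i) k ≠ 0)
    (h6 : 1 - a 1 / a (r + 1) ≠ 0) :
    wpTerm q (q * z) r a k
      - wpTerm q z r (Function.update a (r + 1) (a (r + 1) * q)) k
    = (-((1 - a 1) * (1 - a 1 * q) * (∏ i ∈ Finset.Icc 2 r, (1 - a i)) * z) /
        ((1 - a 1 / a (r + 1)) * ∏ i ∈ Finset.Icc 2 (r + 1), (1 - a 1 * q / a i))) *
        wpTerm q z r (fun i => if i = 1 then a 1 * q ^ 2 else a i * q) (k - 1) := by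
  obtain ⟨m, rfl⟩ : ∃ m, k = m + 1 := ⟨k - 1, by omega⟩
  have hsplit (f : ℕ → K) : ∏ i ∈ Icc 2 (r + 1), f i = (∏ i ∈ Icc 2 r, f i) * f (r + 1) :=
    prod_Icc_succ_top (by omega) f
  have hlast := pow_mul_qPoch_div_sub_qPoch_div q (a (r + 1)) (a 1 / a (r + 1)) m h6
    (by rw [div_mul_eq_mul_div]; exact hden (r + 1) (by simp only [mem_Icc]; omega))
  rw [mul_div_cancel₀ _ (ha (r + 1)), div_mul_eq_mul_div (a 1) _ q,
    div_mul_eq_mul_div (a 1) _ (q ^ 2)] at hlast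
  have hfirst := qPoch_div_qPoch_self_succ_mul q (a 1) m hqq
  rw [wpTerm_eq_mul_prod, wpTerm_update_last q z (by omega), wpTerm_shift q z hq, hsplit, hsplit,
    hsplit, Nat.add_sub_cancel, prod_qPoch_succ_div, mul_div_mul_right _ _ hq]
  -- split the denominator of `β` so that `ring` meets the inverse of `(1 - c) (1 - cq)` of `hlast`
  rw [mul_left_comm (1 - a 1 / a (r + 1)), ← div_div]
  generalize ∏ i ∈ Icc 2 r, (1 - a i) = U, ∏ i ∈ Icc 2 r, (1 - a 1 * q / a i) = V,
    ∏ i ∈ Icc 2 r, qPoch q (a i * q) m / qPoch q (a 1 * q ^ 2 / a i) m = W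
  linear_combination
    (z ^ (m + 1) * (qPoch q (a 1) (m + 1) / qPoch q q (m + 1)) * (U / V * W)) * hlast
      - (z ^ (m + 1) * (U / V * W) *
          (qPoch q (a (r + 1) * q) m / qPoch q (a 1 * q ^ 2 / a (r + 1)) m)
          / ((1 - a 1 / a (r + 1)) * (1 - a 1 * q / a (r + 1)))) * hfirst

/-- The second contiguous relation for well-poised terms:
`F_k(a₁,…,a_{r+1}; q, qz) − F_k(a₁,…,a_r, a_{r+1}q; q, z) = β F_{k−1}(a₁q², a₂q, …, a_{r+1}q; q, z)`. -/
theorem wp_contiguous_two {K : Type*} [Field K] (q z : K) (r : ℕ) (a : ℕ → K) (k : ℕ)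
    (hr : 2 ≤ r) (hk : 1 ≤ k) (hq : q ≠ 0) (ha : ∀ i, a i ≠ 0)
    (hqq : qPoch q q k ≠ 0)
    (hden : ∀ i ∈ Finset.Icc 2 (r + 1), qPoch q (a 1 * q / a i) k ≠ 0)
    (hdenr1 : qPoch q (a 1 / a (r + 1)) k ≠ 0)
    (hden' : ∀ i ∈ Finset.Icc 2 (r + 1), qPoch q (a 1 * q ^ 2 / a i) (k - 1) ≠ 0)
    (h6 : 1 - a 1 / a (r + 1) ≠ 0)
    (h7 : ∀ i ∈ Finset.Icc 2 (r + 1), 1 - a 1 * q / a i ≠ 0) :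
    wpTerm q (q * z) r a k
      - wpTerm q z r (Function.update a (r + 1) (a (r + 1) * q)) k
    = (-((1 - a 1) * (1 - a 1 * q) * (∏ i ∈ Finset.Icc 2 r, (1 - a i)) * z) /
        ((1 - a 1 / a (r + 1)) * ∏ i ∈ Finset.Icc 2 (r + 1), (1 - a 1 * q / a i))) *
        wpTerm q z r (fun i => if i = 1 then a 1 * q ^ 2 else a i * q) (k - 1) :=
  wp_contiguous_two_general q z r a k hr hk hq ha hqq hden h6
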